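/- For q = [[x, 1],[1, 0]] ∈ ℝ^{2×2}⟨x⟩ (one variable), the nc semialgebraic set 𝔓_q is empty, −1 is not in M^1_{0,0}(q), but −1 = (1/2) u* q u for u = [1, −1 − x/2]*, so −1 ∈ M̊^1_1(q). -/

import Mathlib

open scoped Matrix BigOperators
noncomputable section

/-- Free noncommutative polynomials in `g` symmetric variables with real coefficients. -/
abbrev NCPoly (g : ℕ) := MonoidAlgebra ℝ (FreeMonoid (Fin g))

namespace NCPoly

variable {g : ℕ}

/-- Reverse a word (the involution on the free monoid). -/
def wordStar (w : FreeMonoid (Fin g)) : FreeMonoid (Fin g) :=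
  FreeMonoid.ofList (FreeMonoid.toList w).reverse

/-- The involution `*` on `ℝ⟨x⟩`, fixing the variables and reversing words. -/
def adj (p : NCPoly g) : NCPoly g := MonoidAlgebra.ofCoeff (Finsupp.mapDomain wordStar p.coeff)

/-- Degree of a noncommutative polynomial. -/
def deg (p : NCPoly g) : ℕ := p.coeff.support.sup fun w => (FreeMonoid.toList w).length

/-- The variable `x_i`. -/
def X (i : Fin g) : NCPoly g := MonoidAlgebra.single (FreeMonoid.of i) 1

/-- Evaluation of `p` at a `g`-tuple of `n × n` real matrices. -/
def eval {n : ℕ} (X : Fin g → Matrix (Fin n) (Fin n) ℝ) (p : NCPoly g) :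
    Matrix (Fin n) (Fin n) ℝ :=
  (MonoidAlgebra.lift ℝ (Matrix (Fin n) (Fin n) ℝ) (FreeMonoid (Fin g)))
    (FreeMonoid.lift X) p

/-- `p` is homogeneous of degree `m`. -/
def Homog (m : ℕ) (p : NCPoly g) : Prop :=
  ∀ w ∈ p.coeff.support, (FreeMonoid.toList w).length = m

end NCPoly

/-- Matrix-valued noncommutative polynomials. -/
abbrev MatPoly (g : ℕ) (I J : Type*) := Matrix I J (NCPoly g)

namespace MatPoly

variable {g : ℕ}

/-- The involution on matrix polynomials: transpose and star entrywise. -/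
def adj {I J : Type*} (P : MatPoly g I J) : MatPoly g J I := fun i j => NCPoly.adj (P j i)

/-- Degree of a matrix polynomial. -/
def deg {I J : Type*} [Fintype I] [Fintype J] (P : MatPoly g I J) : ℕ :=
  Finset.univ.sup fun p : I × J => NCPoly.deg (P p.1 p.2)

/-- Entrywise (Kronecker) evaluation at a tuple of symmetric `n × n` matrices. -/
def eval {I J : Type*} {n : ℕ} (X : Fin g → Matrix (Fin n) (Fin n) ℝ)
    (P : MatPoly g I J) : Matrix (I × Fin n) (J × Fin n) ℝ :=
  fun ik jl => NCPoly.eval X (P ik.1 jl.1) ik.2 jl.2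

/-- `P` is symmetric: `P* = P`. -/
def IsSymmP {I : Type*} (P : MatPoly g I I) : Prop := adj P = P

/-- The monic linear pencil `I - Σ A_j x_j`. -/
def pencil {ℓ : ℕ} (A : Fin g → Matrix (Fin ℓ) (Fin ℓ) ℝ) : MatPoly g (Fin ℓ) (Fin ℓ) :=
  (1 : Matrix (Fin ℓ) (Fin ℓ) (NCPoly g)) -
    ∑ j : Fin g, (A j).map (fun c => MonoidAlgebra.single (FreeMonoid.of j) c)

/-- A tuple of matrices is symmetric. -/
def SymTuple {n : ℕ} (X : Fin g → Matrix (Fin n) (Fin n) ℝ) : Prop := ∀ j, (X j).IsSymm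

/-- Membership in the nc semialgebraic set `𝔓_q` at level `n`. -/
def InP {I : Type*} [Fintype I] (q : MatPoly g I I) {n : ℕ}
    (X : Fin g → Matrix (Fin n) (Fin n) ℝ) : Prop :=
  SymTuple X ∧ (eval X q).PosSemidef

/-- `p` is a sum of hermitian squares of degree at most `α`. -/
def InSigma {ν : ℕ} (α : ℕ) (p : MatPoly g (Fin ν) (Fin ν)) : Prop :=
  ∃ (m : ℕ) (v : Fin m → Fin ν → NCPoly g),
    (∀ k i, NCPoly.deg (v k i) ≤ α) ∧
    p = fun i j => ∑ k, NCPoly.adj (v k i) * v k j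

/-- Membership in the truncated quadratic module `M^ν_{α,β}(q)`. -/
def InM {ℓ ν : ℕ} (α β : ℕ) (q : MatPoly g (Fin ℓ) (Fin ℓ))
    (p : MatPoly g (Fin ν) (Fin ν)) : Prop :=
  ∃ (σ : MatPoly g (Fin ν) (Fin ν)) (m : ℕ)
    (f : Fin m → MatPoly g (Fin ℓ) (Fin ν)),
    InSigma α σ ∧ (∀ k, deg (f k) ≤ β) ∧
    p = σ + ∑ k, adj (f k) * q * f k

end MatPoly

/-- `σ_#(k) = dim ℝ⟨x⟩_k`. -/
def sigmaSharp (g k : ℕ) : ℕ := ∑ j ∈ Finset.range (k + 1), g ^ j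

/-!
Evaluated at a symmetric `X`, `q` becomes `[[X, I], [I, 0]]`, whose principal `2 × 2` submatrix
through a zero diagonal entry is `[[*, 1], [1, 0]]` with determinant `-1`; so `𝔓_q` is empty.

If `-1 = σ + Σ fₖ* q fₖ` with `σ` a sum of squares and constant `fₖ = (aₖ, bₖ)`, evaluating at a
real point `t` gives `Σ (aₖ² t + 2 aₖ bₖ) ≤ -1`. But `(aₖ t + bₖ)² = t (aₖ² t + 2 aₖ bₖ) + bₖ²`,
so at `t = 1 + Σ bₖ²` the left side exceeds `-1`. Multipliers of degree one escape this
obstruction: `u* q u = -2` for `u = [1, -1 - x/2]*`.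
-/

namespace NCPoly

variable {g : ℕ}

lemma wordStar_eq_self (w : FreeMonoid (Fin 1)) : wordStar w = w := by
  have hrep : FreeMonoid.toList w = .replicate (FreeMonoid.toList w).length 0 :=
    List.eq_replicate_length.mpr fun b _ => Subsingleton.elim b 0
  have hrev : (FreeMonoid.toList w).reverse = FreeMonoid.toList w := by
    rw [hrep, List.reverse_replicate]
  rw [wordStar, hrev, FreeMonoid.ofList_toList]

lemma adj_eq_self (p : NCPoly 1) : adj p = p := by
  have : wordStar (g := 1) = id := funext wordStar_eq_self
  rw [adj, this, Finsupp.mapDomain_id]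

lemma adj_smul (c : ℝ) (p : NCPoly g) : adj (c • p) = c • adj p :=
  congrArg MonoidAlgebra.ofCoeff (Finsupp.mapDomain_smul c p.coeff)

lemma deg_le_iff {p : NCPoly g} {d : ℕ} :
    deg p ≤ d ↔ ∀ w ∈ p.coeff.support, (FreeMonoid.toList w).length ≤ d :=
  Finset.sup_le_iff

lemma deg_smul_le (c : ℝ) (p : NCPoly g) : deg (c • p) ≤ deg p :=
  Finset.sup_mono Finsupp.support_smul

lemma deg_sub_le (p q : NCPoly g) : deg (p - q) ≤ max (deg p) (deg q) := by
  classical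
  rw [deg, MonoidAlgebra.coeff_sub, deg, deg, ← Finset.sup_union]
  exact Finset.sup_mono Finsupp.support_sub

lemma deg_neg (p : NCPoly g) : deg (-p) = deg p := by
  rw [deg, MonoidAlgebra.coeff_neg, Finsupp.support_neg, deg]

lemma deg_single_le (w : FreeMonoid (Fin g)) (c : ℝ) :
    deg (MonoidAlgebra.single w c) ≤ (FreeMonoid.toList w).length :=
  deg_le_iff.2 fun _ hv => by rw [Finset.mem_singleton.1 (Finsupp.support_single_subset hv)]

lemma deg_one_le : deg (1 : NCPoly g) ≤ 0 := deg_single_le 1 1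

lemma deg_X_le (i : Fin g) : deg (X i) ≤ 1 := deg_single_le (FreeMonoid.of i) 1

lemma eq_single_of_deg_le_zero {p : NCPoly g} (h : deg p ≤ 0) :
    p = MonoidAlgebra.single 1 (p.coeff 1) := by
  ext w
  by_cases hw : w = 1
  · simp [hw]
  · have hw' : w ∉ p.coeff.support := fun hmem =>
      hw <| FreeMonoid.length_eq_zero.1 <| Nat.le_zero.1 (deg_le_iff.1 h w hmem)
    simp [Finsupp.notMem_support_iff.1 hw', Ne.symm hw]

def evalScalar (t : Fin g → ℝ) : NCPoly g →ₐ[ℝ] ℝ :=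
  MonoidAlgebra.lift ℝ ℝ (FreeMonoid (Fin g)) (FreeMonoid.lift t)

lemma evalScalar_X (t : Fin g → ℝ) (i : Fin g) : evalScalar t (X i) = t i := by
  simp [evalScalar, X]

lemma evalScalar_of_deg_le_zero (t : Fin g → ℝ) {p : NCPoly g} (h : deg p ≤ 0) :
    evalScalar t p = p.coeff 1 := by
  rw [eq_single_of_deg_le_zero h]
  simp [evalScalar]

lemma evalScalar_adj (t : Fin g → ℝ) (p : NCPoly g) : evalScalar t (adj p) = evalScalar t p := by
  rw [evalScalar, MonoidAlgebra.lift_apply, MonoidAlgebra.lift_apply, adj,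
    MonoidAlgebra.coeff_ofCoeff, Finsupp.sum_mapDomain_index
    (h := fun w c => c • FreeMonoid.lift t w) (fun _ => zero_smul ℝ _) fun _ _ _ => add_smul _ _ _]
  refine Finsupp.sum_congr fun w _ => ?_
  rw [wordStar, FreeMonoid.lift_apply, FreeMonoid.lift_apply, FreeMonoid.toList_ofList,
    List.map_reverse, List.prod_reverse]

end NCPoly

namespace MatPoly

variable {g : ℕ}

lemma adj_smul {I J : Type*} (c : ℝ) (P : MatPoly g I J) : adj (c • P) = c • adj P := by
  funext i j
  exact NCPoly.adj_smul c (P j i)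

lemma deg_le_iff {I J : Type*} [Fintype I] [Fintype J] {P : MatPoly g I J} {d : ℕ} :
    deg P ≤ d ↔ ∀ i j, NCPoly.deg (P i j) ≤ d := by
  simp [deg, Finset.sup_le_iff]

lemma evalScalar_apply_self_nonneg_of_inSigma {ν α : ℕ} {σ : MatPoly g (Fin ν) (Fin ν)}
    (hσ : InSigma α σ) (t : Fin g → ℝ) (i : Fin ν) : 0 ≤ NCPoly.evalScalar t (σ i i) := by
  obtain ⟨m, v, -, rfl⟩ := hσ
  simp only [map_sum, map_mul, NCPoly.evalScalar_adj]
  exact Finset.sum_nonneg fun k _ => mul_self_nonneg _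

lemma evalScalar_adj_mul_mul_apply {I J : Type*} [Fintype I] (t : Fin g → ℝ)
    (f : MatPoly g I J) (q : MatPoly g I I) (k l : J) :
    NCPoly.evalScalar t ((adj f * q * f) k l) =
      ∑ j, ∑ i, NCPoly.evalScalar t (f i k) * NCPoly.evalScalar t (q i j) *
        NCPoly.evalScalar t (f j l) := by
  simp only [Matrix.mul_apply, map_sum, map_mul, adj, NCPoly.evalScalar_adj, Finset.sum_mul]

lemma deg_smul_le {I J : Type*} [Fintype I] [Fintype J] (c : ℝ) (P : MatPoly g I J) :
    deg (c • P) ≤ deg P :=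
  deg_le_iff.2 fun i j => (NCPoly.deg_smul_le c (P i j)).trans (deg_le_iff.1 le_rfl i j)

lemma not_inP_of_zero_corner {n : ℕ} {q : MatPoly g (Fin 2) (Fin 2)} (h01 : q 0 1 = 1)
    (h10 : q 1 0 = 1) (h11 : q 1 1 = 0) (hn : 0 < n) (X : Fin g → Matrix (Fin n) (Fin n) ℝ) :
    ¬ InP q X := by
  rintro ⟨-, hpsd⟩
  have hdet := (hpsd.submatrix ![((0 : Fin 2), (⟨0, hn⟩ : Fin n)), (1, ⟨0, hn⟩)]).det_nonneg
  rw [Matrix.det_fin_two] at hdet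
  norm_num [eval, h01, h10, h11, NCPoly.eval] at hdet

end MatPoly

lemma not_forall_sum_sq_mul_add_le_neg_one {ι : Type*} [Fintype ι] (a b : ι → ℝ) :
    ¬ ∀ t : ℝ, ∑ k, (a k ^ 2 * t + 2 * a k * b k) ≤ -1 := by
  intro h
  set T := ∑ k, b k ^ 2 + 1
  have hT : 0 < T := by positivity
  have hsq : ∑ k, (a k * T + b k) ^ 2 = T * ∑ k, (a k ^ 2 * T + 2 * a k * b k) + ∑ k, b k ^ 2 := by
    rw [Finset.mul_sum, ← Finset.sum_add_distrib]
    exact Finset.sum_congr rfl fun k _ => by ring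
  have := Finset.sum_nonneg fun k (_ : k ∈ Finset.univ) => sq_nonneg (a k * T + b k)
  nlinarith [h T]

section Example

local notation "𝐪" => (!![NCPoly.X 0, 1; 1, 0] : MatPoly 1 (Fin 2) (Fin 2))

local notation "𝐮" => (!![1; -1 - (1/2 : ℝ) • NCPoly.X 0] : MatPoly 1 (Fin 2) (Fin 1))

open NCPoly

lemma evalScalar_adj_mul_mul_apply_zero_zero (t : ℝ) (f : MatPoly 1 (Fin 2) (Fin 1)) :
    evalScalar (fun _ => t) ((MatPoly.adj f * 𝐪 * f) 0 0) =
      evalScalar (fun _ => t) (f 0 0) ^ 2 * t +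
        2 * evalScalar (fun _ => t) (f 0 0) * evalScalar (fun _ => t) (f 1 0) := by
  simp [MatPoly.evalScalar_adj_mul_mul_apply, Fin.sum_univ_two, evalScalar_X]
  ring

lemma not_inM_zero_zero_neg_one : ¬ MatPoly.InM 0 0 𝐪 (-1 : MatPoly 1 (Fin 1) (Fin 1)) := by
  rintro ⟨σ, m, f, hσ, hf, h⟩
  refine not_forall_sum_sq_mul_add_le_neg_one (fun k => (f k 0 0).coeff 1)
    (fun k => (f k 1 0).coeff 1) fun t => ?_
  have h00 := congrArg (evalScalar fun _ => t) (congrFun (congrFun h 0) 0)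
  have hconst : ∀ k i, evalScalar (fun _ => t) (f k i 0) = (f k i 0).coeff 1 :=
    fun k i => evalScalar_of_deg_le_zero _ (MatPoly.deg_le_iff.1 (hf k) i 0)
  simp only [Matrix.neg_apply, Matrix.one_apply_eq, Matrix.add_apply, Matrix.sum_apply, map_neg,
    map_one, map_add, map_sum, evalScalar_adj_mul_mul_apply_zero_zero, hconst] at h00
  linarith [MatPoly.evalScalar_apply_self_nonneg_of_inSigma hσ (fun _ => t) 0]

lemma neg_one_eq_half_smul_adj_mul_mul :
    (-1 : MatPoly 1 (Fin 1) (Fin 1)) = (1/2 : ℝ) • (MatPoly.adj 𝐮 * 𝐪 * 𝐮) := by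
  funext i j
  fin_cases i; fin_cases j
  simp [MatPoly.adj, adj_eq_self, Matrix.mul_apply, Fin.sum_univ_two, sub_mul, mul_sub]
  module

lemma deg_witness_le_one : MatPoly.deg 𝐮 ≤ 1 := by
  refine MatPoly.deg_le_iff.2 fun i j => ?_
  fin_cases i <;> fin_cases j
  · exact deg_one_le.trans zero_le_one
  · refine (deg_sub_le _ _).trans (max_le ?_ ((deg_smul_le _ _).trans (deg_X_le 0)))
    rw [deg_neg]
    exact deg_one_le.trans zero_le_one

end Example

/-- for `q = [[x,1],[1,0]]` the set `𝔓_q` is empty, `-1` is not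
in `M^1_{0,0}(q)`, but `-1 = ½ u* q u` for `u = [1, -1-x/2]*`, so
`-1 ∈ M̊^1_1(q)`. -/
theorem stmt16 :
    let x : NCPoly 1 := NCPoly.X 0
    let q : MatPoly 1 (Fin 2) (Fin 2) := !![x, 1; 1, 0]
    let u : MatPoly 1 (Fin 2) (Fin 1) := !![(1 : NCPoly 1); -1 - (1/2 : ℝ) • x]
    (∀ (n : ℕ), 0 < n → ∀ X : Fin 1 → Matrix (Fin n) (Fin n) ℝ,
      ¬ MatPoly.InP q X) ∧
    ¬ MatPoly.InM 0 0 q (-1 : MatPoly 1 (Fin 1) (Fin 1)) ∧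
    (-1 : MatPoly 1 (Fin 1) (Fin 1)) = (1/2 : ℝ) • (MatPoly.adj u * q * u) ∧
    (∃ (m : ℕ) (f : Fin m → MatPoly 1 (Fin 2) (Fin 1)),
      (∀ k, MatPoly.deg (f k) ≤ 1) ∧
      (-1 : MatPoly 1 (Fin 1) (Fin 1)) = ∑ k, MatPoly.adj (f k) * q * f k) := by
  intro x q u
  have hhalf : (-1 : MatPoly 1 (Fin 1) (Fin 1)) = (1/2 : ℝ) • (MatPoly.adj u * q * u) :=
    neg_one_eq_half_smul_adj_mul_mul
  refine ⟨fun n hn X => MatPoly.not_inP_of_zero_corner rfl rfl rfl hn X,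
    not_inM_zero_zero_neg_one, hhalf, 2, fun _ => (1/2 : ℝ) • u,
    fun _ => (MatPoly.deg_smul_le _ _).trans deg_witness_le_one, ?_⟩
  simp only [Fin.sum_univ_two, MatPoly.adj_smul, Matrix.smul_mul, Matrix.mul_smul, smul_smul,
    ← add_smul]
  rw [hhalf]
  norm_num
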